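/- arXiv:2209.07096 — 2 statements merged into one kernel-verified Lean document; each statement's English description precedes it below -/
import Mathlib

section
/- Let A be a finite nonempty set, Q : A → ℝ, and c : A → ℝ with c(a) ≥ 0 for all a, and assume the feasible set F = {a ∈ A : c(a) = 0} is nonempty. Then there exists β₀ ≥ 0 such that for all β ≥ β₀, argmax over A of (Q(a) − β·c(a)) is contained in F, and max_{a∈A} (Q(a) − β·c(a)) = max_{a∈F} Q(a). -/
theorem exact_penalization {A : Type*} [Fintype A] [Nonempty A]
    (Q c : A → ℝ) (hc : ∀ a, 0 ≤ c a)
    (a₀ : A) (ha₀ : c a₀ = 0) :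
    ∃ β₀ : ℝ, 0 ≤ β₀ ∧ ∀ β : ℝ, β₀ ≤ β →
      (∀ a : A, (∀ b : A, Q b - β * c b ≤ Q a - β * c a) → c a = 0) ∧
      (Finset.univ.sup' Finset.univ_nonempty (fun a => Q a - β * c a)
        = (Finset.univ.filter (fun a => c a = 0)).sup'
            ⟨a₀, by simp [ha₀]⟩ Q) := by
  set f : A → ℝ := fun a => if c a = 0 then 0 else (Q a - Q a₀) / c a + 1 with hf
  refine ⟨max 0 (Finset.univ.sup' Finset.univ_nonempty f), le_max_left _ _, ?_⟩
  intro β hβ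
  -- key: infeasible points are strictly worse than a₀
  have key : ∀ a : A, c a ≠ 0 → Q a - β * c a < Q a₀ := by
    intro a ha
    have hca : 0 < c a := lt_of_le_of_ne (hc a) (Ne.symm ha)
    have h1 : (Q a - Q a₀) / c a + 1 ≤ β := by
      calc (Q a - Q a₀) / c a + 1 = f a := by simp [hf, ha]
        _ ≤ Finset.univ.sup' Finset.univ_nonempty f :=
            Finset.le_sup' f (Finset.mem_univ a)
        _ ≤ max 0 _ := le_max_right _ _
        _ ≤ β := hβ
    have h2 : ((Q a - Q a₀) / c a + 1) * c a ≤ β * c a :=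
      mul_le_mul_of_nonneg_right h1 (hc a)
    have h3 : (Q a - Q a₀) + c a ≤ β * c a := by
      have : ((Q a - Q a₀) / c a + 1) * c a = (Q a - Q a₀) + c a := by
        field_simp
      linarith [this ▸ h2]
    linarith
  constructor
  · intro a hmax
    by_contra ha
    have := hmax a₀
    have := key a ha
    rw [ha₀] at *
    linarith
  · apply le_antisymm
    · apply Finset.sup'_le
      intro a _
      by_cases ha : c a = 0
      · calc Q a - β * c a = Q a := by rw [ha]; ring
          _ ≤ _ := Finset.le_sup' Q (by simp [ha])
      · calc Q a - β * c a ≤ Q a₀ := le_of_lt (key a ha)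
          _ ≤ _ := Finset.le_sup' Q (by simp [ha₀])
    · apply Finset.sup'_le
      intro a ha
      simp only [Finset.mem_filter] at ha
      calc Q a = Q a - β * c a := by rw [ha.2]; ring
        _ ≤ _ := Finset.le_sup' (fun a => Q a - β * c a) (Finset.mem_univ a)
end

section
/- Let S and A be finite, T a transition kernel, R a reward, γ ∈ [0,1), and for each state s let F(s) ⊆ A be a nonempty set of allowed actions. Define the restricted Bellman operator (FV)(s) = max_{a ∈ F(s)} (R(s,a) + γ ∑_{s'} T(s'|s,a) V(s')). Suppose β : S → ℝ≥0 and c : S × A → ℝ≥0 satisfy c(s,a) = 0 iff a ∈ F(s), and β(s) ≥ max_{a ∉ F(s)} (Q(s,a) − max_{a'∈F(s)} Q(s,a'))/c(s,a) where Q(s,a) = R(s,a) + γ ∑_{s'} T(s'|s,a) V(s'), for the fixed point V of F. Then V also satisfies the unconstrained penalized Bellman equation V(s) = max_{a∈A} (R(s,a) + γ ∑_{s'} T(s'|s,a) V(s') − β(s)·c(s,a)) for all s. -/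
theorem penalized_bellman_equals_restricted {S A : Type*}
    [Fintype S] [Fintype A] [Nonempty A]
    (γ : ℝ) (hγ0 : 0 ≤ γ) (hγ1 : γ < 1)
    (T : S → A → S → ℝ) (R : S → A → ℝ)
    (hT0 : ∀ s a s', 0 ≤ T s a s') (hT1 : ∀ s a, ∑ s', T s a s' = 1)
    (F : S → Finset A) (hFne : ∀ s, (F s).Nonempty)
    (V : S → ℝ)
    (hV : ∀ s, V s = (F s).sup' (hFne s)
        (fun a => R s a + γ * ∑ s', T s a s' * V s'))
    (β : S → ℝ) (hβ0 : ∀ s, 0 ≤ β s)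
    (c : S → A → ℝ) (hc0 : ∀ s a, 0 ≤ c s a)
    (hcF : ∀ s a, c s a = 0 ↔ a ∈ F s)
    (hβ : ∀ s a, a ∉ F s →
      ((R s a + γ * ∑ s', T s a s' * V s')
        - (F s).sup' (hFne s) (fun a' => R s a' + γ * ∑ s', T s a' s' * V s'))
        / c s a ≤ β s) :
    ∀ s, V s = Finset.univ.sup' Finset.univ_nonempty
        (fun a => R s a + γ * ∑ s', T s a s' * V s' - β s * c s a) := by
  intro s
  apply le_antisymm
  · -- V s ≤ sup: witness in F s
    obtain ⟨a, haF, ha⟩ := Finset.exists_mem_eq_sup' (hFne s)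
      (fun a => R s a + γ * ∑ s', T s a s' * V s')
    have hca : c s a = 0 := (hcF s a).mpr haF
    calc V s = R s a + γ * ∑ s', T s a s' * V s' - β s * c s a := by
          rw [hV s, ha, hca]; ring
      _ ≤ _ := Finset.le_sup' (fun a => R s a + γ * ∑ s', T s a s' * V s' - β s * c s a) (Finset.mem_univ a)
  · apply Finset.sup'_le
    intro a _
    by_cases haF : a ∈ F s
    · have hca : c s a = 0 := (hcF s a).mpr haF
      rw [hca, mul_zero, sub_zero, hV s]
      exact Finset.le_sup' (fun a => R s a + γ * ∑ s', T s a s' * V s') haF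
    · have hca : 0 < c s a :=
        lt_of_le_of_ne (hc0 s a) (fun h => haF ((hcF s a).mp h.symm))
      have h := hβ s a haF
      rw [div_le_iff₀ hca] at h
      have : β s * c s a ≤ β s * c s a := le_refl _
      nlinarith [hV s, h]
end
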